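/- arXiv:1712.03838 — 3 statements merged into one kernel-verified Lean document; each statement's English description precedes it below -/
import Mathlib

section
/- If s ∈ R \ R^{G_a} has minimal degree among all noninvariants, then s is a local slice, i.e., every a ∈ R_c with deg(a) < deg(s) lies in (R_c)^{G_a}, where c is the highest coefficient of φ(s). -/
/-! The leading coefficient `c` of `φ s` is invariant: compare top coefficients in the
coassociativity identity. Write `a ∈ R_c` as `r / c ^ k`. Then `φ r` becomes of degree `< deg s`
in `R_c[z]`, so some power `c ^ j` kills all its coefficients of degree `≥ deg s` already in `R`.
By minimality `c ^ j * r` is invariant, and so is `a`, its quotient by the invariant unit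
`c ^ (j + k)`. -/

open Polynomial

def IsGaCoaction {R : Type*} [CommRing R] (φ : R →+* Polynomial R) : Prop :=
  (∀ s : R, (φ s).eval 0 = s) ∧
  (∀ s : R, (φ s).map φ =
      (φ s).eval₂ ((Polynomial.C : Polynomial R →+* Polynomial (Polynomial R)).comp
        Polynomial.C) (Polynomial.X + Polynomial.C Polynomial.X))

namespace IsGaCoaction

variable {R : Type*} [CommRing R] {φ : R →+* R[X]}

theorem ne_zero_of_ne_C (hφ : IsGaCoaction φ) {s : R} (hs : φ s ≠ C s) : φ s ≠ 0 := by
  intro h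
  have hs0 : s = 0 := by rw [← hφ.1 s, h, eval_zero]
  exact hs (by rw [h, hs0, map_zero])

theorem map_leadingCoeff (hφ : IsGaCoaction φ) (s : R) :
    φ (φ s).leadingCoeff = C (φ s).leadingCoeff := by
  nontriviality R
  have hlin : (X + C X : R[X][X]).natDegree = 1 := natDegree_X_add_C _
  have h := congrArg (coeff · (φ s).natDegree) (hφ.2 s)
  simp only [coeff_map] at h
  rw [← eval₂_map, ← comp] at h
  have htop := coeff_comp_degree_mul_degree (p := (φ s).map C) (q := X + C X) (by simp [hlin])
  rw [hlin, mul_one, natDegree_map_eq_of_injective C_injective] at htop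
  rw [leadingCoeff, h, htop, leadingCoeff_map_of_injective C_injective, leadingCoeff_X_add_C,
    one_pow, mul_one, leadingCoeff]

end IsGaCoaction

attribute [local instance] Polynomial.algebra Polynomial.isLocalization in
theorem IsLocalization.exists_C_mul_degree_lt_of_degree_map_lt {R S : Type*} [CommRing R]
    [CommRing S] [Algebra R S] (M : Submonoid R) [IsLocalization M S] {p : R[X]} {n : ℕ}
    (hp : (p.map (algebraMap R S)).degree < n) : ∃ m ∈ M, (C m * p).degree < n := by
  nontriviality R
  have hmonic : (X ^ n : R[X]).Monic := monic_X_pow n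
  -- `p = p %ₘ X ^ n + X ^ n * (p /ₘ X ^ n)`, and the quotient vanishes in `S[X]`.
  have hquot : algebraMap R[X] S[X] (p /ₘ X ^ n) = 0 := by
    nontriviality S
    rw [algebraMap_def, coe_mapRingHom, map_divByMonic _ hmonic, Polynomial.map_pow, map_X,
      divByMonic_eq_zero_iff (monic_X_pow n), degree_X_pow]
    exact hp
  obtain ⟨⟨_, m, hm, rfl⟩, hm0⟩ := (IsLocalization.map_eq_zero_iff (M.map C) S[X] _).mp hquot
  refine ⟨m, hm, ?_⟩
  rw [← modByMonic_add_div p (X ^ n), mul_add, mul_left_comm, hm0, mul_zero, add_zero]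
  calc (C m * (p %ₘ X ^ n)).degree ≤ (p %ₘ X ^ n).degree := by
        rw [← smul_eq_C_mul]; exact degree_smul_le m _
    _ < n := by simpa using degree_modByMonic_lt p hmonic

theorem RingHom.apply_eq_C_of_mul_isUnit {A : Type*} [CommRing A] (f : A →+* A[X]) {x u : A}
    (hu : IsUnit u) (hfu : f u = C u) (hxu : f (x * u) = C (x * u)) : f x = C x :=
  (hu.map C).mul_right_cancel (by rw [← hfu, ← map_mul, hxu, hfu, map_mul])

/-- a noninvariant `s` of minimal degree among all noninvariants is a local
slice: with `c` the leading coefficient of `φ s`, every element of the localization `R_c`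
of degree `< deg s` (with respect to the extended coaction `φc`) is invariant. -/
theorem stmt2 {K R : Type*} [CommRing K] [CommRing R] [Algebra K R]
    (φ : R →ₐ[K] Polynomial R) (hφ : IsGaCoaction φ.toRingHom)
    (s : R) (hs : φ s ≠ Polynomial.C s)
    (hmin : ∀ a : R, φ a ≠ Polynomial.C a → (φ s).degree ≤ (φ a).degree)
    (c : R) (hc : c = (φ s).leadingCoeff)
    (φc : Localization.Away c →+* Polynomial (Localization.Away c))
    (hext : ∀ r : R, φc (algebraMap R (Localization.Away c) r) =
      (φ r).map (algebraMap R (Localization.Away c))) :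
    ∀ a : Localization.Away c, (φc a).degree < (φ s).degree → φc a = Polynomial.C a := by
  have hdeg : (φ s).degree = (φ s).natDegree := degree_eq_natDegree (hφ.ne_zero_of_ne_C hs)
  have hφc : ∀ n : ℕ, φ (c ^ n) = C (c ^ n) := fun n ↦ by
    rw [map_pow, C_pow, hc]
    exact congrArg (· ^ n) (hφ.map_leadingCoeff s)
  set ι := algebraMap R (Localization.Away c)
  have hinv : ∀ r, φ r = C r → φc (ι r) = C (ι r) := fun r hr ↦ by rw [hext, hr, map_C]
  intro a ha
  obtain ⟨⟨r, _, k, rfl⟩, hr⟩ := IsLocalization.surj (Submonoid.powers c) a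
  have hmap : ((φ r).map ι).degree < (φ s).natDegree := by
    rw [← hext, ← hr, map_mul, hinv _ (hφc k), mul_comm, ← smul_eq_C_mul, ← hdeg]
    exact (degree_smul_le _ _).trans_lt ha
  obtain ⟨_, ⟨j, rfl⟩, hj⟩ :=
    IsLocalization.exists_C_mul_degree_lt_of_degree_map_lt (Submonoid.powers c) hmap
  dsimp only at hr hj
  have hr' : φ (c ^ j * r) = C (c ^ j * r) := by
    by_contra hne
    refine (hmin _ hne).not_gt ?_
    rwa [map_mul, hφc, hdeg]
  have hu : IsUnit (ι c ^ (j + k)) := (IsLocalization.Away.algebraMap_isUnit c).pow _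
  refine φc.apply_eq_C_of_mul_isUnit hu (by rw [← map_pow]; exact hinv _ (hφc _)) ?_
  have hnum : a * ι c ^ (j + k) = ι (c ^ j * r) := by
    rw [pow_add, map_mul, map_pow, ← hr, map_pow]; ring
  rw [hnum]
  exact hinv _ hr'
end

section
/- Local slice theorem, part (d) — base change of invariants: With s a local slice of degree d and denominator c, let B be any commutative ring with a ring homomorphism η: (R_c)^{G_a} → B. Then the invariant ring of the induced G_a-coaction on B ⊗_{(R_c)^{G_a}} R_c is exactly B ⊗ 1. Equivalently, (B ⊗_{(R_c)^{G_a}} R_c)^{G_a} = B. -/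
open Polynomial TensorProduct

/-- The invariant subring `A^{G_a} = ker(φc - id)` of a coaction `φc : A → A[z]`. -/
noncomputable def invSubring {A : Type*} [CommRing A] (φc : A →+* Polynomial A) : Subring A :=
  RingHom.eqLocus φc (Polynomial.C : A →+* Polynomial A)

/-!
Coassociativity of a `G_a`-coaction `ψ` says that `ψ` maps the `j`-th coefficient of `ψ a` to the
`j`-th Hasse derivative of `ψ a`. Hence the leading coefficient of every `ψ a` is invariant, and
against a slice `t` of degree `d` (leading coefficient a unit `u`) comparing coefficients gives
`(n choose j) • lc(ψ a) = 0` for `0 < j < d`, `n = deg ψ a`. For `a = t` this says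
`(X + 1)^d = X^d + 1`, whence `(n choose n % d) = 1` and so `d ∣ n`; subtracting
`lc(ψ a) u^(-n/d) t^(n/d)` then lowers `deg ψ a`, so the ring is generated by `t` over its
invariants. After base change every element is `p(1 ⊗ t)` with `p ∈ B[X]`, and its coaction is
`p(ψ t)`, a composition with a polynomial of positive degree and unit leading coefficient: it is
constant only when `p` is.
-/

namespace IsGaCoaction

variable {A : Type*} [CommRing A] {ψ : A →+* A[X]}

theorem apply_coeff (hψ : IsGaCoaction ψ) (a : A) (j : ℕ) :
    ψ ((ψ a).coeff j) = hasseDeriv j (ψ a) := by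
  rw [← coeff_map, hψ.2 a, eval₂_eq_sum, hasseDeriv_apply, sum_def, sum_def, finsetSum_coeff]
  refine Finset.sum_congr rfl fun i _ => ?_
  rw [RingHom.comp_apply, coeff_C_mul, coeff_X_add_C_pow, ← C_mul_X_pow_eq_monomial, C_mul,
    ← C_eq_natCast]
  ring

theorem apply_leadingCoeff (hψ : IsGaCoaction ψ) (a : A) :
    ψ (ψ a).leadingCoeff = C (ψ a).leadingCoeff := by
  have h : (hasseDeriv (ψ a).natDegree (ψ a)).natDegree = 0 := by
    simpa using natDegree_hasseDeriv_le (ψ a) (ψ a).natDegree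
  rw [leadingCoeff, hψ.apply_coeff, eq_C_of_natDegree_eq_zero h, hasseDeriv_coeff,
    zero_add, Nat.choose_self, Nat.cast_one, one_mul]

theorem apply_eq_C_of_natDegree_eq_zero (hψ : IsGaCoaction ψ) {a : A}
    (ha : (ψ a).natDegree = 0) : ψ a = C a := by
  conv_rhs => rw [← hψ.1 a, eq_C_of_natDegree_eq_zero ha, eval_C]
  exact eq_C_of_natDegree_eq_zero ha

theorem of_isLocalization {R S : Type*} [CommRing R] [CommRing S] [Algebra R S]
    (M : Submonoid R) [IsLocalization M S] {φ : R →+* R[X]} (hφ : IsGaCoaction φ)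
    {φS : S →+* S[X]} (hext : ∀ r, φS (algebraMap R S r) = (φ r).map (algebraMap R S)) :
    IsGaCoaction φS := by
  have hcomp : φS.comp (algebraMap R S) = (mapRingHom (algebraMap R S)).comp φ :=
    RingHom.ext hext
  constructor
  · have h : (evalRingHom 0).comp φS = RingHom.id S :=
      IsLocalization.ringHom_ext M (RingHom.ext fun r => by
        rw [RingHom.comp_apply, RingHom.comp_apply, hext, coe_evalRingHom, eval_zero_map, hφ.1 r]
        rfl)
    exact RingHom.congr_fun h
  · have h : (mapRingHom φS).comp φS =
        (eval₂RingHom ((C : S[X] →+* S[X][X]).comp C) (X + C X)).comp φS := by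
      refine IsLocalization.ringHom_ext M (RingHom.ext fun r => ?_)
      simp only [RingHom.comp_apply, coe_mapRingHom, coe_eval₂RingHom]
      rw [hext, Polynomial.map_map, hcomp, ← Polynomial.map_map, hφ.2 r, ← coe_mapRingHom,
        hom_eval₂, eval₂_map]
      congr 1
      · ext; simp
      · simp
    exact RingHom.congr_fun h

end IsGaCoaction

theorem cast_choose_mod_eq_one {S : Type*} [CommRing S] {d : ℕ} (hd : 0 < d)
    (h : ∀ j, 0 < j → j < d → (d.choose j : S) = 0) (n : ℕ) :
    (n.choose (n % d) : S) = 1 := by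
  have hXd : (X + 1 : S[X]) ^ d = X ^ d + 1 := by
    ext k
    rw [coeff_X_add_one_pow, coeff_add, coeff_X_pow, coeff_one]
    rcases Nat.lt_trichotomy k d with hk | rfl | hk
    · rcases Nat.eq_zero_or_pos k with rfl | hk0
      · simp [hd.ne]
      · simp [h k hk0 hk, hk.ne, hk0.ne']
    · simp [hd.ne']
    · simp [Nat.choose_eq_zero_of_lt hk, hk.ne', (hd.trans hk).ne']
  obtain ⟨g, hg⟩ : X ^ d ∣ (X ^ d + 1 : S[X]) ^ (n / d) - 1 := by
    have := sub_dvd_pow_sub_pow (X ^ d + 1 : S[X]) 1 (n / d)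
    rwa [add_sub_cancel_right, one_pow] at this
  have key : (X + 1 : S[X]) ^ n = (X + 1) ^ (n % d) + X ^ d * (g * (X + 1) ^ (n % d)) := by
    conv_lhs => rw [← Nat.div_add_mod n d, pow_add, pow_mul, hXd,
      ← sub_add_cancel ((X ^ d + 1 : S[X]) ^ (n / d)) 1, hg]
    ring
  simpa [coeff_X_add_one_pow, coeff_X_pow_mul', (Nat.mod_lt n hd).not_ge] using
    congrArg (coeff · (n % d)) key

theorem Polynomial.natDegree_eq_zero_of_comp_eq_C {R : Type*} [CommRing R] {p q : R[X]} {r : R}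
    (hq : 0 < q.natDegree) (hlc : IsUnit q.leadingCoeff) (h : p.comp q = C r) :
    p.natDegree = 0 := by
  rcases eq_or_ne p 0 with rfl | hp
  · exact natDegree_zero
  have hne : p.leadingCoeff * q.leadingCoeff ^ p.natDegree ≠ 0 :=
    (hlc.pow _).mul_left_eq_zero.not.mpr (leadingCoeff_ne_zero.mpr hp)
  have := natDegree_comp_eq_of_mul_ne_zero hne
  rw [h, natDegree_C] at this
  exact (Nat.mul_eq_zero.mp this.symm).resolve_right hq.ne'

section Slice

variable {A : Type*} [CommRing A]

/-- The paper's local slice after inverting its denominator `c`: `ψ t` has invertible leading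
coefficient, and every `a` with `deg ψ a < deg ψ t` is invariant. -/
structure IsLocalSlice (ψ : A →+* A[X]) (t : A) : Prop where
  natDegree_pos : 0 < (ψ t).natDegree
  isUnit_leadingCoeff : IsUnit (ψ t).leadingCoeff
  apply_eq_C_of_natDegree_lt : ∀ a, (ψ a).natDegree < (ψ t).natDegree → ψ a = C a

theorem isLocalSlice_algebraMap {R S : Type*} [CommRing R] [CommRing S] [Algebra R S]
    [Nontrivial S] {φ : R →+* R[X]} (hφ : IsGaCoaction φ) {s : R} (hs : φ s ≠ C s)
    (hunit : IsUnit (algebraMap R S (φ s).leadingCoeff)) {φS : S →+* S[X]}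
    (hext : ∀ r, φS (algebraMap R S r) = (φ r).map (algebraMap R S))
    (hslice : ∀ a, (φS a).degree < (φ s).degree → φS a = C a) :
    IsLocalSlice φS (algebraMap R S s) := by
  have hdeg : (φS (algebraMap R S s)).natDegree = (φ s).natDegree := by
    rw [hext, natDegree_map_of_leadingCoeff_ne_zero _ hunit.ne_zero]
  have hpos : 0 < (φ s).natDegree :=
    Nat.pos_of_ne_zero fun h => hs (hφ.apply_eq_C_of_natDegree_eq_zero h)
  refine ⟨hdeg ▸ hpos, ?_, fun a ha => hslice a ?_⟩
  · rwa [hext, leadingCoeff_map_of_leadingCoeff_ne_zero _ hunit.ne_zero]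
  · rw [degree_eq_natDegree (ne_zero_of_natDegree_gt hpos)]
    exact degree_le_natDegree.trans_lt (by exact_mod_cast hdeg ▸ ha)

variable {ψ : A →+* A[X]} {t : A}

namespace IsLocalSlice

theorem choose_mul_leadingCoeff_eq_zero (hψ : IsGaCoaction ψ) (ht : IsLocalSlice ψ t) (a : A)
    {j : ℕ} (hj0 : 0 < j) (hjd : j < (ψ t).natDegree) (hjn : j ≤ (ψ a).natDegree) :
    ((ψ a).natDegree.choose j : A) * (ψ a).leadingCoeff = 0 := by
  set n := (ψ a).natDegree
  have hinv : ψ ((ψ a).coeff (n - j)) = C ((ψ a).coeff (n - j)) := by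
    refine ht.apply_eq_C_of_natDegree_lt _ ?_
    rw [hψ.apply_coeff]
    exact (natDegree_hasseDeriv_le _ _).trans_lt (by omega)
  have := congrArg (coeff · j) (hψ.apply_coeff a (n - j))
  simp only [hinv, coeff_C, if_neg hj0.ne', hasseDeriv_coeff, Nat.add_sub_cancel' hjn,
    Nat.choose_symm hjn] at this
  exact this.symm

theorem dvd_natDegree (hψ : IsGaCoaction ψ) (ht : IsLocalSlice ψ t) (a : A) :
    (ψ t).natDegree ∣ (ψ a).natDegree := by
  have hd : ∀ j, 0 < j → j < (ψ t).natDegree → ((ψ t).natDegree.choose j : A) = 0 :=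
    fun j hj0 hjd => ht.isUnit_leadingCoeff.mul_left_eq_zero.mp
      (ht.choose_mul_leadingCoeff_eq_zero hψ t hj0 hjd hjd.le)
  refine Nat.dvd_of_mod_eq_zero (by_contra fun hr => hr ?_)
  have := ht.choose_mul_leadingCoeff_eq_zero hψ a (Nat.pos_of_ne_zero hr)
    (Nat.mod_lt _ ht.natDegree_pos) (Nat.mod_le _ _)
  rw [cast_choose_mod_eq_one ht.natDegree_pos hd, one_mul, leadingCoeff_eq_zero] at this
  simp [this]

theorem adjoin_eq_top (hψ : IsGaCoaction ψ) (ht : IsLocalSlice ψ t) :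
    Algebra.adjoin (invSubring ψ) {t} = ⊤ := by
  obtain ⟨u, hu⟩ := ht.isUnit_leadingCoeff
  have hu_inv : ψ ↑u⁻¹ = C ↑u⁻¹ := by
    have h : Units.map ψ.toMonoidHom u = Units.map C.toMonoidHom u :=
      Units.ext (by simpa [hu] using hψ.apply_leadingCoeff t)
    simpa using congrArg (fun v => ((v⁻¹ : (A[X])ˣ) : A[X])) h
  refine Algebra.eq_top_iff.mpr fun a => ?_
  induction hn : (ψ a).natDegree using Nat.strong_induction_on generalizing a with
  | _ n ih =>
  rcases Nat.eq_zero_or_pos n with rfl | hn0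
  · exact Subalgebra.algebraMap_mem _ (⟨a, hψ.apply_eq_C_of_natDegree_eq_zero hn⟩ : invSubring ψ)
  obtain ⟨q, hq⟩ := ht.dvd_natDegree hψ a
  set k := (ψ a).leadingCoeff * ↑u⁻¹ ^ q
  have hk : ψ k = C k := by simp [k, hψ.apply_leadingCoeff, hu_inv]
  have hψa' : ψ (a - k * t ^ q) = ψ a - C k * ψ t ^ q := by simp [hk]
  have hle : (ψ (a - k * t ^ q)).natDegree ≤ n := by
    rw [hψa']
    refine (natDegree_sub_le _ _).trans (max_le hn.le (natDegree_C_mul_le _ _ |>.trans ?_))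
    exact natDegree_pow_le.trans (by rw [← hn, hq, mul_comm])
  have hcoeff : (ψ (a - k * t ^ q)).coeff n = 0 := by
    have htop : (ψ t ^ q).coeff n = ↑u ^ q := by
      rw [← hn, hq, mul_comm, coeff_pow_mul_natDegree, hu]
    rw [hψa', coeff_sub, coeff_C_mul, htop, ← hn, coeff_natDegree, mul_assoc, ← mul_pow,
      Units.inv_mul, one_pow, mul_one, sub_self]
  have hmem := ih _ (by have := natDegree_le_pred hle hcoeff; omega) (a - k * t ^ q) rfl
  rw [← sub_add_cancel a (k * t ^ q)]
  exact add_mem hmem (mul_mem (Subalgebra.algebraMap_mem _ (⟨k, hk⟩ : invSubring ψ))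
    (pow_mem (Algebra.self_mem_adjoin_singleton _ _) _))

theorem exists_eq_tmul_one_of_apply_eq_C (hψ : IsGaCoaction ψ) (ht : IsLocalSlice ψ t)
    {B : Type*} [CommRing B] [Algebra (invSubring ψ) B]
    {φ' : B ⊗[invSubring ψ] A →+* (B ⊗[invSubring ψ] A)[X]}
    (hφ' : ∀ (b : B) (a : A), φ' (b ⊗ₜ a) = C (b ⊗ₜ (1 : A)) *
      (ψ a).map (Algebra.TensorProduct.includeRight : A →ₐ[invSubring ψ] B ⊗[invSubring ψ] A))
    {x : B ⊗[invSubring ψ] A} (hx : φ' x = C x) :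
    ∃ b : B, x = b ⊗ₜ (1 : A) := by
  rcases subsingleton_or_nontrivial (B ⊗[invSubring ψ] A) with hT | hT
  · exact ⟨0, Subsingleton.elim _ _⟩
  set ρ : A →+* B ⊗[invSubring ψ] A :=
    (Algebra.TensorProduct.includeRight : A →ₐ[invSubring ψ] B ⊗[invSubring ψ] A).toRingHom
  set f := algebraMap B (B ⊗[invSubring ψ] A)
  obtain ⟨p, rfl⟩ : ∃ p : B[X], aeval ((1 : B) ⊗ₜ[invSubring ψ] t) p = x := by
    have := Algebra.TensorProduct.adjoin_one_tmul_image_eq_top (A := B) _ (ht.adjoin_eq_top hψ)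
    rw [Set.image_singleton, Algebra.adjoin_singleton_eq_range_aeval] at this
    exact (AlgHom.mem_range _).mp (this ▸ Algebra.mem_top)
  have hQ := natDegree_map_eq_of_isUnit_leadingCoeff ρ ht.isUnit_leadingCoeff
  have hQlc : IsUnit ((ψ t).map ρ).leadingCoeff := by
    rw [leadingCoeff_map_eq_of_isUnit_leadingCoeff ρ ht.isUnit_leadingCoeff]
    exact ht.isUnit_leadingCoeff.map ρ
  have hφ'_aeval : φ' (aeval ((1 : B) ⊗ₜ[invSubring ψ] t) p) = (p.map f).comp ((ψ t).map ρ) := by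
    have hf : φ'.comp f = C.comp f := RingHom.ext fun b => by simp [f, hφ']
    rw [aeval_def, hom_eval₂, hf, comp, eval₂_map, hφ', ← Algebra.TensorProduct.one_def, C_1,
      one_mul]
    rfl
  have hp := natDegree_eq_zero_of_comp_eq_C (hQ ▸ ht.natDegree_pos) hQlc (hφ'_aeval ▸ hx)
  refine ⟨p.coeff 0, ?_⟩
  rw [aeval_def, ← eval_map, eq_C_of_natDegree_eq_zero hp, eval_C, coeff_map]
  rfl

end IsLocalSlice

end Slice

/-- local slice theorem, part (d), base change of invariants: for `B` any
commutative ring which is an algebra over the invariant ring `(R_c)^{G_a}` (a subring of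
`R_c`), the invariants of the induced coaction `φ' = id_B ⊗ φc` on
`B ⊗_{(R_c)^{G_a}} R_c` are exactly `B ⊗ 1`. -/
theorem stmt8 {K R : Type*} [CommRing K] [CommRing R] [Algebra K R]
    (φ : R →ₐ[K] Polynomial R) (hφ : IsGaCoaction φ.toRingHom)
    (s : R) (hs : φ s ≠ Polynomial.C s)
    (c : R) (hc : c = (φ s).leadingCoeff)
    (φc : Localization.Away c →+* Polynomial (Localization.Away c))
    (hext : ∀ r : R, φc (algebraMap R (Localization.Away c) r) =
      (φ r).map (algebraMap R (Localization.Away c)))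
    (hslice : ∀ a : Localization.Away c,
      (φc a).degree < (φ s).degree → φc a = Polynomial.C a)
    (B : Type*) [CommRing B] [Algebra (invSubring φc) B]
    (φ' : (B ⊗[invSubring φc] Localization.Away c) →+*
      Polynomial (B ⊗[invSubring φc] Localization.Away c))
    (hφ' : ∀ (b : B) (a : Localization.Away c),
      φ' (b ⊗ₜ a) =
        Polynomial.C ((b ⊗ₜ (1 : Localization.Away c)) :
            B ⊗[invSubring φc] Localization.Away c) *
          Polynomial.map
            ((Algebra.TensorProduct.includeRight :
              Localization.Away c →ₐ[invSubring φc]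
                B ⊗[invSubring φc] Localization.Away c) :
              Localization.Away c →+* B ⊗[invSubring φc] Localization.Away c)
            (φc a)) :
    ∀ x : B ⊗[invSubring φc] Localization.Away c,
      φ' x = Polynomial.C x ↔ ∃ b : B, x = b ⊗ₜ (1 : Localization.Away c) := by
  have hφc : IsGaCoaction φc := hφ.of_isLocalization (Submonoid.powers c) hext
  intro x
  refine ⟨fun hx => ?_, ?_⟩
  · rcases subsingleton_or_nontrivial (Localization.Away c) with hS | hS
    · refine ⟨0, ?_⟩
      rw [← mul_one x, Algebra.TensorProduct.one_def, Subsingleton.elim (1 : Localization.Away c) 0]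
      simp
    have ht : IsLocalSlice φc (algebraMap R (Localization.Away c) s) :=
      isLocalSlice_algebraMap hφ hs (hc ▸ IsLocalization.Away.algebraMap_isUnit c) hext hslice
    exact ht.exists_eq_tmul_one_of_apply_eq_C hφc hφ' hx
  · rintro ⟨b, rfl⟩
    rw [hφ', map_one, Polynomial.map_one, mul_one]
end

section
/- Quotient of a Laurent extension detects divisibility: Let Φ: R → R[t^{±1}] be a G_m-coaction, c a nonzero semi-invariant, and s ∈ R_c a local slice of degree d. Then for every a ∈ R_c, Φ(a) lies in R_c[t^{±d}], i.e., only powers of t divisible by d occur in Φ(a). -/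
/-!
The coefficient of `t^k` in `Φ(a)` is a semi-invariant of weight `k`: over `R` this is the
coassociativity of `Φ`, and it survives localization at the semi-invariant `c`. Multiplying it by
the unit `s^(k / d)` of weight `-d * (k / d)` gives a semi-invariant of weight `k % d`, whose
degree is below `d`; it is therefore invariant, and an invariant semi-invariant of nonzero
weight vanishes.
-/

open LaurentPolynomial

def IsGmCoaction {R : Type*} [CommRing R] (Φ : R →+* LaurentPolynomial R) : Prop :=
  (∀ a : R, (Φ a).coeff.sum (fun _ r => r) = a) ∧
  (∀ a : R, Finsupp.mapRange ⇑Φ (map_zero Φ) (Φ a).coeff =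
    (Φ a).coeff.sum fun k r => Finsupp.single k (LaurentPolynomial.C r * LaurentPolynomial.T k))

namespace LaurentPolynomial

lemma coeff_C_mul_T {A : Type*} [Semiring A] (a : A) (m n : ℤ) :
    (C a * T m).coeff n = if m = n then a else 0 := by
  rw [← single_eq_C_mul_T, AddMonoidAlgebra.coeff_single, Finsupp.single_apply]

lemma coeff_mul_C_mul_T_add {A : Type*} [Semiring A] (p : A[T;T⁻¹]) (a : A) (m n : ℤ) :
    (p * (C a * T m)).coeff (n + m) = p.coeff n * a := by
  rw [← single_eq_C_mul_T, AddMonoidAlgebra.coeff_mul_single_add]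

end LaurentPolynomial

def IsSemiInvariant {A : Type*} [CommSemiring A] (Φ : A →+* A[T;T⁻¹]) (m : ℤ) (x : A) : Prop :=
  Φ x = C x * T m

namespace IsSemiInvariant

variable {A : Type*} [CommSemiring A] {Φ : A →+* A[T;T⁻¹]} {m n : ℤ} {x y : A}

lemma one : IsSemiInvariant Φ 0 1 := by
  rw [IsSemiInvariant, map_one, map_one, T_zero, one_mul]

lemma mul (hx : IsSemiInvariant Φ m x) (hy : IsSemiInvariant Φ n y) :
    IsSemiInvariant Φ (m + n) (x * y) := by
  rw [IsSemiInvariant, map_mul, hx, hy, map_mul, T_add]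
  ring

lemma pow (hx : IsSemiInvariant Φ m x) (k : ℕ) : IsSemiInvariant Φ (k * m) (x ^ k) := by
  rw [IsSemiInvariant, map_pow, hx, mul_pow, ← map_pow, T_pow]

lemma of_mul_right (hxy : IsSemiInvariant Φ (m + n) (x * y)) (hy : IsSemiInvariant Φ n y)
    (hunit : IsUnit y) : IsSemiInvariant Φ m x := by
  refine (hunit.map Φ).mul_right_cancel ?_
  rw [← map_mul, hxy, hy, map_mul, T_add]
  ring

lemma units_inv {u : Aˣ} (hu : IsSemiInvariant Φ m u) : IsSemiInvariant Φ (-m) ↑u⁻¹ := by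
  refine of_mul_right (n := m) ?_ hu u.isUnit
  rw [neg_add_cancel, Units.inv_mul]
  exact one

lemma units_zpow {u : Aˣ} (hu : IsSemiInvariant Φ m u) (k : ℤ) :
    IsSemiInvariant Φ (k * m) ↑(u ^ k) := by
  cases k with
  | ofNat k =>
    simpa only [Int.ofNat_eq_natCast, zpow_natCast, Units.val_pow_eq_pow_val] using hu.pow k
  | negSucc k =>
    have hpow : IsSemiInvariant Φ ((k + 1 : ℕ) * m) ↑(u ^ (k + 1)) := by
      rw [Units.val_pow_eq_pow_val]
      exact hu.pow (k + 1)
    convert hpow.units_inv using 1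
    · rw [Int.negSucc_eq]
      push_cast
      ring
    · rw [zpow_negSucc]

lemma coeff_eq_zero (hx : IsSemiInvariant Φ m x) (hn : n ≠ m) : (Φ x).coeff n = 0 := by
  rw [hx, coeff_C_mul_T, if_neg hn.symm]

lemma eq_zero_of_map_eq_C (hx : IsSemiInvariant Φ m x) (hm : m ≠ 0) (hC : Φ x = C x) :
    x = 0 := by
  have := congrArg (fun p => p.coeff m) (hx.symm.trans hC)
  simpa [coeff_C_mul_T, hm] using this

end IsSemiInvariant

lemma IsGmCoaction.isSemiInvariant_coeff {R : Type*} [CommRing R] {Φ : R →+* R[T;T⁻¹]}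
    (hΦ : IsGmCoaction Φ) (r : R) (j : ℤ) : IsSemiInvariant Φ j ((Φ r).coeff j) := by
  have h := congrArg (· j) (hΦ.2 r)
  simp only [Finsupp.mapRange_apply, Finsupp.sum_apply, Finsupp.single_apply,
    Finsupp.sum_ite_eq'] at h
  split_ifs at h with hj
  · exact h
  · rw [IsSemiInvariant, h, Finsupp.notMem_support_iff.mp hj, map_zero, zero_mul]

lemma IsSemiInvariant.map_of_coeff_eq_mapRange {R S : Type*} [CommSemiring R] [CommSemiring S]
    {f : R →+* S} {Φ : R →+* R[T;T⁻¹]} {Ψ : S →+* S[T;T⁻¹]}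
    (hext : ∀ r : R, (Ψ (f r)).coeff = Finsupp.mapRange f (map_zero f) (Φ r).coeff)
    {m : ℤ} {r : R} (hr : IsSemiInvariant Φ m r) : IsSemiInvariant Ψ m (f r) := by
  refine LaurentPolynomial.ext fun n => ?_
  rw [hext, Finsupp.mapRange_apply, hr, coeff_C_mul_T, coeff_C_mul_T, apply_ite f, map_zero]

theorem IsLocalization.isSemiInvariant_coeff {R S : Type*} [CommSemiring R] [CommSemiring S]
    [Algebra R S] (M : Submonoid R) [IsLocalization M S]
    {Φ : R →+* R[T;T⁻¹]} {Ψ : S →+* S[T;T⁻¹]}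
    (hext : ∀ r : R, (Ψ (algebraMap R S r)).coeff =
      Finsupp.mapRange (algebraMap R S) (map_zero (algebraMap R S)) (Φ r).coeff)
    (hΦ : ∀ (r : R) (j : ℤ), IsSemiInvariant Φ j ((Φ r).coeff j))
    (hM : ∀ m ∈ M, ∃ w, IsSemiInvariant Φ w m) (a : S) (j : ℤ) :
    IsSemiInvariant Ψ j ((Ψ a).coeff j) := by
  obtain ⟨⟨r, m⟩, hrm⟩ := IsLocalization.surj M a
  obtain ⟨w, hw⟩ := hM m m.2
  have hmS := hw.map_of_coeff_eq_mapRange hext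
  have hcoeff : (Ψ a).coeff j * algebraMap R S m = algebraMap R S ((Φ r).coeff (j + w)) := by
    rw [← coeff_mul_C_mul_T_add, ← hmS, ← map_mul, hrm, hext, Finsupp.mapRange_apply]
  refine IsSemiInvariant.of_mul_right (n := w) ?_ hmS (IsLocalization.map_units S m)
  rw [hcoeff]
  exact (hΦ r (j + w)).map_of_coeff_eq_mapRange hext

section Slice

variable {A : Type*} [CommSemiring A] {Φ : A →+* A[T;T⁻¹]} {d : ℤ}

lemma IsSemiInvariant.eq_zero_of_abs_lt
    (hslice : ∀ a : A, (∀ k : ℤ, d ≤ |k| → (Φ a).coeff k = 0) → Φ a = C a)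
    {m : ℤ} {x : A} (hx : IsSemiInvariant Φ m x) (hm : m ≠ 0) (hmd : |m| < d) : x = 0 :=
  hx.eq_zero_of_map_eq_C hm <| hslice x fun _ hk =>
    hx.coeff_eq_zero <| by rintro rfl; exact (hmd.trans_le hk).false

theorem coeff_map_eq_zero_of_not_dvd
    (hcoeff : ∀ (a : A) (j : ℤ), IsSemiInvariant Φ j ((Φ a).coeff j))
    (hd : 0 < d) {u : Aˣ} (hu : IsSemiInvariant Φ (-d) u)
    (hslice : ∀ a : A, (∀ k : ℤ, d ≤ |k| → (Φ a).coeff k = 0) → Φ a = C a)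
    (a : A) {k : ℤ} (hk : ¬ d ∣ k) : (Φ a).coeff k = 0 := by
  have hrem : IsSemiInvariant Φ (k % d) ((Φ a).coeff k * ↑(u ^ (k / d))) := by
    convert (hcoeff a k).mul (hu.units_zpow (k / d)) using 1
    rw [Int.emod_def]
    ring
  have hrem_ne : k % d ≠ 0 := fun h => hk (Int.dvd_of_emod_eq_zero h)
  have hrem_lt : |k % d| < d := by
    rw [abs_of_nonneg (Int.emod_nonneg k hd.ne')]
    exact Int.emod_lt_of_pos k hd
  exact (Units.mul_left_eq_zero _).mp (hrem.eq_zero_of_abs_lt hslice hrem_ne hrem_lt)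

end Slice

theorem stmt19_general {K R : Type*} [CommRing K] [CommRing R] [Algebra K R]
    (Φ : R →ₐ[K] LaurentPolynomial R) (hΦ : IsGmCoaction Φ.toRingHom)
    (c : R) (w : ℤ) (hw : Φ c = LaurentPolynomial.C c * LaurentPolynomial.T w)
    (Φc : Localization.Away c →+* LaurentPolynomial (Localization.Away c))
    (hext : ∀ r : R, (Φc (algebraMap R (Localization.Away c) r)).coeff =
      Finsupp.mapRange (algebraMap R (Localization.Away c))
        (map_zero (algebraMap R (Localization.Away c))) (Φ r).coeff)
    (d : ℤ) (hd : 0 < d)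
    (s : Localization.Away c) (hunit : IsUnit s)
    (hsemi : Φc s = LaurentPolynomial.C s * LaurentPolynomial.T (-d))
    (hslice : ∀ a : Localization.Away c,
      (∀ k : ℤ, d ≤ |k| → (Φc a).coeff k = 0) → Φc a = LaurentPolynomial.C a) :
    ∀ (a : Localization.Away c) (k : ℤ), ¬ d ∣ k → (Φc a).coeff k = 0 := by
  obtain ⟨u, rfl⟩ := hunit
  have hpowers : ∀ m ∈ Submonoid.powers c, ∃ w', IsSemiInvariant Φ.toRingHom w' m := by
    rintro _ ⟨n, rfl⟩
    exact ⟨n * w, IsSemiInvariant.pow hw n⟩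
  have hcoeff := IsLocalization.isSemiInvariant_coeff (Φ := Φ.toRingHom) (Submonoid.powers c)
    hext hΦ.isSemiInvariant_coeff hpowers
  exact fun a k hk => coeff_map_eq_zero_of_not_dvd hcoeff hd hsemi hslice a hk

/-- if `s ∈ R_c` is a `G_m`-local slice of degree `d`, then for every
`a ∈ R_c` only powers `t^k` with `d ∣ k` occur in `Φ(a)`, i.e. `Φ(a) ∈ R_c[t^{±d}]`. -/
theorem stmt19 {K R : Type*} [CommRing K] [CommRing R] [Algebra K R]
    (Φ : R →ₐ[K] LaurentPolynomial R) (hΦ : IsGmCoaction Φ.toRingHom)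
    (c : R) (hc : c ≠ 0) (w : ℤ) (hw : Φ c = LaurentPolynomial.C c * LaurentPolynomial.T w)
    (Φc : Localization.Away c →+* LaurentPolynomial (Localization.Away c))
    (hext : ∀ r : R, (Φc (algebraMap R (Localization.Away c) r)).coeff =
      Finsupp.mapRange (algebraMap R (Localization.Away c))
        (map_zero (algebraMap R (Localization.Away c))) (Φ r).coeff)
    (d : ℤ) (hd : 0 < d)
    (s : Localization.Away c) (hunit : IsUnit s)
    (hsemi : Φc s = LaurentPolynomial.C s * LaurentPolynomial.T (-d))
    (hslice : ∀ a : Localization.Away c,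
      (∀ k : ℤ, d ≤ |k| → (Φc a).coeff k = 0) → Φc a = LaurentPolynomial.C a) :
    ∀ (a : Localization.Away c) (k : ℤ), ¬ d ∣ k → (Φc a).coeff k = 0 :=
  stmt19_general Φ hΦ c w hw Φc hext d hd s hunit hsemi hslice
end
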